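/- Let f be convex with ‖∇f_i(x)‖² ≤ G² for each sampled gradient, and suppose at each iteration k the step size γ_k satisfies γ_{l,K-1} ≤ γ_k ≤ γ_{b,0}/√(k+1), where γ_{l,K-1} > 0, and the iterates follow deterministic subgradient descent x^{k+1} = x^k - γ_k ∇f(x^k). Then the average iterate x̄_K = (1/K)∑_{k=0}^{K-1} x^k satisfies f(x̄_K) - f(x*) ≤ ‖x⁰ - x*‖²/(2γ_{l,K-1}K) + γ_{b,0}²G²(1 + log K)/(2γ_{l,K-1}K). -/

import Mathlib

/-!
Convexity gives `f xₖ - f x* ≤ ⟪∇f xₖ, xₖ - x*⟫`, and expanding the square in the update rule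
turns this into `2 γₖ (f xₖ - f x*) ≤ ‖xₖ - x*‖² - ‖xₖ₊₁ - x*‖² + γₖ² G²`. Since `f xₖ - f x* ≥ 0`,
the left side may be weakened to the lower envelope `γl`, while `γₖ² ≤ γb0² / (k + 1)`. Summing,
the distances telescope and the step terms add up to at most a harmonic number `≤ 1 + log K`;
Jensen's inequality passes from the average of the values to the value at the averaged iterate.
-/

open Finset Real RealInnerProductSpace

theorem ConvexOn.add_fderiv_le {E : Type*} [NormedAddCommGroup E] [NormedSpace ℝ E]
    {s : Set E} {f : E → ℝ} {f' : E →L[ℝ] ℝ} {a b : E}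
    (hf : ConvexOn ℝ s f) (ha : a ∈ s) (hb : b ∈ s) (hfa : HasFDerivAt f f' a) :
    f a + f' (b - a) ≤ f b := by
  have hline := hf.comp_affineMap (AffineMap.lineMap a b : ℝ →ᵃ[ℝ] E)
  have hderiv : HasDerivAt (f ∘ (AffineMap.lineMap a b : ℝ →ᵃ[ℝ] E)) (f' (b - a)) 0 := by
    rw [← AffineMap.lineMap_apply_zero a b (k := ℝ)] at hfa
    exact hfa.comp_hasDerivAt 0 AffineMap.hasDerivAt_lineMap
  have hslope := hline.le_slope_of_hasDerivAt (x := 0) (y := 1) (by simpa using ha)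
    (by simpa using hb) one_pos hderiv
  simp only [slope, Function.comp_apply, AffineMap.lineMap_apply_zero,
    AffineMap.lineMap_apply_one, sub_zero, inv_one, one_smul, vsub_eq_sub] at hslope
  linarith

theorem ConvexOn.add_inner_gradient_le {E : Type*} [NormedAddCommGroup E]
    [InnerProductSpace ℝ E] [CompleteSpace E] {s : Set E} {f : E → ℝ} {f' : E} {a b : E}
    (hf : ConvexOn ℝ s f) (ha : a ∈ s) (hb : b ∈ s) (hfa : HasGradientAt f f' a) :
    f a + ⟪f', b - a⟫ ≤ f b := by
  simpa using hf.add_fderiv_le ha hb (hasGradientAt_iff_hasFDerivAt.mp hfa)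

theorem ConvexOn.map_finset_average_le {E : Type*} [AddCommGroup E] [Module ℝ E] {s : Set E}
    {f : E → ℝ} {ι : Type*} {t : Finset ι} {x : ι → E}
    (hf : ConvexOn ℝ s f) (ht : t.Nonempty) (hx : ∀ i ∈ t, x i ∈ s) :
    f ((#t : ℝ)⁻¹ • ∑ i ∈ t, x i) ≤ (#t : ℝ)⁻¹ * ∑ i ∈ t, f (x i) := by
  rw [smul_sum, mul_sum]
  refine hf.map_sum_le (fun _ _ => by positivity) ?_ hx
  rw [sum_const, nsmul_eq_mul]
  field_simp [ht.card_pos.ne']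

theorem norm_sub_smul_sub_sq {E : Type*} [NormedAddCommGroup E] [InnerProductSpace ℝ E]
    (x y g : E) (γ : ℝ) :
    ‖x - γ • g - y‖ ^ 2 = ‖x - y‖ ^ 2 - 2 * γ * ⟪g, x - y⟫ + γ ^ 2 * ‖g‖ ^ 2 := by
  rw [sub_right_comm, norm_sub_sq_real, real_inner_smul_right, real_inner_comm, norm_smul,
    mul_pow, Real.norm_eq_abs, sq_abs]
  ring

theorem ConvexOn.two_mul_sub_le_of_gradient_step {E : Type*} [NormedAddCommGroup E]
    [InnerProductSpace ℝ E] [CompleteSpace E] {s : Set E} {f : E → ℝ} {g x y : E} {c γ : ℝ}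
    (hf : ConvexOn ℝ s f) (hx : x ∈ s) (hys : y ∈ s) (hg : HasGradientAt f g x)
    (hy : f y ≤ f x) (hc : 0 ≤ c) (hcγ : c ≤ γ) :
    2 * c * (f x - f y) ≤ ‖x - y‖ ^ 2 - ‖x - γ • g - y‖ ^ 2 + γ ^ 2 * ‖g‖ ^ 2 := by
  have hinner : f x - f y ≤ ⟪g, x - y⟫ := by
    have := hf.add_inner_gradient_le hx hys hg
    rw [← neg_sub, inner_neg_right] at this
    linarith
  rw [norm_sub_smul_sub_sq]
  calc 2 * c * (f x - f y) ≤ 2 * γ * (f x - f y) :=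
      mul_le_mul_of_nonneg_right (by linarith) (sub_nonneg.mpr hy)
    _ ≤ 2 * γ * ⟪g, x - y⟫ := mul_le_mul_of_nonneg_left hinner (by linarith)
    _ = _ := by ring

theorem sq_mul_le_div_succ {γ γ₀ a G : ℝ} (k : ℕ) (hγ : 0 ≤ γ) (hγk : γ ≤ γ₀ / √(k + 1))
    (ha : 0 ≤ a) (haG : a ≤ G) :
    γ ^ 2 * a ^ 2 ≤ γ₀ ^ 2 * G ^ 2 / (k + 1) := by
  have : γ * a ≤ γ₀ / √(k + 1) * G := mul_le_mul hγk haG ha (hγ.trans hγk)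
  calc γ ^ 2 * a ^ 2 = (γ * a) ^ 2 := by ring
    _ ≤ (γ₀ / √(k + 1) * G) ^ 2 := pow_le_pow_left₀ (by positivity) this 2
    _ = γ₀ ^ 2 * G ^ 2 / (k + 1) := by
      rw [mul_pow, div_pow, sq_sqrt (by positivity)]
      ring

theorem sum_range_le_of_le_sub_add_div_succ {a d : ℕ → ℝ} {c : ℝ} {K : ℕ}
    (hd : 0 ≤ d K) (hc : 0 ≤ c) (ha : ∀ k < K, a k ≤ d k - d (k + 1) + c / (k + 1)) :
    ∑ k ∈ range K, a k ≤ d 0 + c * (1 + log K) := by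
  have hharmonic : ∑ k ∈ range K, c / ((k : ℝ) + 1) ≤ c * (1 + log K) := by
    have := harmonic_le_one_add_log K
    simp only [harmonic, Rat.cast_sum, Rat.cast_inv, Rat.cast_add, Rat.cast_natCast,
      Rat.cast_one, Nat.cast_succ] at this
    simp only [div_eq_mul_inv, ← mul_sum]
    gcongr
  calc ∑ k ∈ range K, a k ≤ ∑ k ∈ range K, (d k - d (k + 1) + c / (k + 1)) :=
        sum_le_sum fun k hk => ha k (mem_range.mp hk)
    _ = d 0 - d K + ∑ k ∈ range K, c / ((k : ℝ) + 1) := by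
        rw [sum_add_distrib, sum_range_sub']
    _ ≤ d 0 + c * (1 + log K) := by linarith

theorem envelope_step_convex_rate_general {n : ℕ}
    (f : EuclideanSpace ℝ (Fin n) → ℝ) (f' : EuclideanSpace ℝ (Fin n) → EuclideanSpace ℝ (Fin n))
    (hgrad : ∀ z, HasGradientAt f (f' z) z)
    (hconv : ConvexOn ℝ Set.univ f)
    (G : ℝ) (hGbound : ∀ z, ‖f' z‖ ≤ G)
    (xstar : EuclideanSpace ℝ (Fin n)) (hmin : ∀ z, f xstar ≤ f z)
    (γb0 ω : ℝ) (hγb0 : 0 < γb0) (hω : 0 < ω)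
    (K : ℕ) (hK : 1 ≤ K)
    (γl : ℝ) (hγl : γl = min ω (γb0 / Real.sqrt K))
    (x : ℕ → EuclideanSpace ℝ (Fin n)) (γ : ℕ → ℝ)
    (hupd : ∀ k, x (k + 1) = x k - γ k • f' (x k))
    (hstep : ∀ k < K, γl ≤ γ k ∧ γ k ≤ γb0 / Real.sqrt (k + 1)) :
    f ((K : ℝ)⁻¹ • ∑ k ∈ Finset.range K, x k) - f xstar ≤
      ‖x 0 - xstar‖ ^ 2 / (2 * γl * K) +
        γb0 ^ 2 * G ^ 2 * (1 + Real.log K) / (2 * γl * K) := by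
  have hK₀ : (0 : ℝ) < K := by exact_mod_cast hK
  have hγl₀ : 0 < γl := hγl ▸ lt_min hω (by positivity)
  have hdescent : ∀ k < K, 2 * γl * (f (x k) - f xstar) ≤
      ‖x k - xstar‖ ^ 2 - ‖x (k + 1) - xstar‖ ^ 2 + γb0 ^ 2 * G ^ 2 / (k + 1) := by
    intro k hk
    obtain ⟨hlow, hhigh⟩ := hstep k hk
    rw [hupd]
    have hdist := hconv.two_mul_sub_le_of_gradient_step (Set.mem_univ _) (Set.mem_univ _)
      (hgrad (x k)) (hmin (x k)) hγl₀.le hlow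
    have hsq := sq_mul_le_div_succ k (hγl₀.le.trans hlow) hhigh (norm_nonneg _) (hGbound (x k))
    linarith
  have hsum : ∑ k ∈ range K, 2 * γl * (f (x k) - f xstar) ≤
      ‖x 0 - xstar‖ ^ 2 + γb0 ^ 2 * G ^ 2 * (1 + log K) :=
    sum_range_le_of_le_sub_add_div_succ (by positivity) (by positivity) hdescent
  have hjensen := hconv.map_finset_average_le (t := range K) (x := x)
    (nonempty_range_iff.mpr (by omega)) (fun _ _ => Set.mem_univ _)
  rw [card_range] at hjensen
  rw [← mul_sum, sum_sub_distrib, sum_const, card_range, nsmul_eq_mul] at hsum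
  rw [← add_div, le_div_iff₀ (by positivity)]
  calc _ ≤ ((K : ℝ)⁻¹ * ∑ k ∈ range K, f (x k) - f xstar) * (2 * γl * K) :=
        mul_le_mul_of_nonneg_right (sub_le_sub_right hjensen _) (by positivity)
    _ = 2 * γl * (∑ k ∈ range K, f (x k) - K * f xstar) := by field_simp
    _ ≤ _ := hsum

/-- Convergence of subgradient descent with envelope step sizes
γ_{l,K-1} ≤ γ_k ≤ γ_{b,0}/√(k+1) for a convex function with bounded gradients. -/
theorem envelope_step_convex_rate {n : ℕ}
    (f : EuclideanSpace ℝ (Fin n) → ℝ) (f' : EuclideanSpace ℝ (Fin n) → EuclideanSpace ℝ (Fin n))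
    (hgrad : ∀ z, HasGradientAt f (f' z) z)
    (hconv : ConvexOn ℝ Set.univ f)
    (G : ℝ) (hG : 0 < G) (hGbound : ∀ z, ‖f' z‖ ≤ G)
    (xstar : EuclideanSpace ℝ (Fin n)) (hmin : ∀ z, f xstar ≤ f z)
    (γb0 ω : ℝ) (hγb0 : 0 < γb0) (hω : 0 < ω)
    (K : ℕ) (hK : 1 ≤ K)
    (γl : ℝ) (hγl : γl = min ω (γb0 / Real.sqrt K))
    (x : ℕ → EuclideanSpace ℝ (Fin n)) (γ : ℕ → ℝ)
    (hupd : ∀ k, x (k + 1) = x k - γ k • f' (x k))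
    (hstep : ∀ k < K, γl ≤ γ k ∧ γ k ≤ γb0 / Real.sqrt (k + 1)) :
    f ((K : ℝ)⁻¹ • ∑ k ∈ Finset.range K, x k) - f xstar ≤
      ‖x 0 - xstar‖ ^ 2 / (2 * γl * K) +
        γb0 ^ 2 * G ^ 2 * (1 + Real.log K) / (2 * γl * K) :=
  envelope_step_convex_rate_general f f' hgrad hconv G hGbound xstar hmin γb0 ω hγb0 hω K hK γl hγl
    x γ hupd hstep
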